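/- For any element X of the intersection poset L(A) of a hyperplane arrangement A, the sign of the Möbius function value μ(X) = μ(V,X) is (−1)^{codim X}; i.e., (−1)^{codim X} μ(X) > 0. -/
import Mathlib


open Polynomial MvPolynomial

/-- Defining relations of the `n`-th Weyl algebra over `K`:
generators `Sum.inl i` are the multiplication operators `x_i`, generators
`Sum.inr i` are the partial derivations `∂_i`. -/
inductive WeylRel (K : Type) [Field K] (n : ℕ) :
    FreeAlgebra K (Fin n ⊕ Fin n) → FreeAlgebra K (Fin n ⊕ Fin n) → Prop
  | xx (i j : Fin n) : WeylRel K n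
      (FreeAlgebra.ι K (Sum.inl i) * FreeAlgebra.ι K (Sum.inl j))
      (FreeAlgebra.ι K (Sum.inl j) * FreeAlgebra.ι K (Sum.inl i))
  | dd (i j : Fin n) : WeylRel K n
      (FreeAlgebra.ι K (Sum.inr i) * FreeAlgebra.ι K (Sum.inr j))
      (FreeAlgebra.ι K (Sum.inr j) * FreeAlgebra.ι K (Sum.inr i))
  | dx (i j : Fin n) : WeylRel K n
      (FreeAlgebra.ι K (Sum.inr i) * FreeAlgebra.ι K (Sum.inl j))
      (FreeAlgebra.ι K (Sum.inl j) * FreeAlgebra.ι K (Sum.inr i)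
        + if i = j then 1 else 0)

/-- The `n`-th Weyl algebra `D_n` over `K`. -/
abbrev Weyl (K : Type) [Field K] (n : ℕ) : Type := RingQuot (WeylRel K n)

/-- The operator `x_i ∈ D_n`. -/
noncomputable def wX (K : Type) [Field K] (n : ℕ) (i : Fin n) : Weyl K n :=
  RingQuot.mkAlgHom K (WeylRel K n) (FreeAlgebra.ι K (Sum.inl i))

/-- The operator `∂_i ∈ D_n`. -/
noncomputable def wD (K : Type) [Field K] (n : ℕ) (i : Fin n) : Weyl K n :=
  RingQuot.mkAlgHom K (WeylRel K n) (FreeAlgebra.ι K (Sum.inr i))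

/-- The Bernstein filtration on the Weyl algebra: `F_k(D_n)` is spanned by the
monomials `x^α ∂^β` with `|α| + |β| ≤ k`. -/
noncomputable def bernsteinF (K : Type) [Field K] (n : ℕ) (k : ℤ) :
    Submodule K (Weyl K n) :=
  Submodule.span K {w | ∃ α β : Fin n → ℕ,
    ((∑ i, α i : ℕ) + (∑ i, β i : ℕ) : ℤ) ≤ k ∧
    w = ((List.finRange n).map fun i => wX K n i ^ α i).prod *
        ((List.finRange n).map fun i => wD K n i ^ β i).prod}

/-- A good Bernstein filtration on a left `D_n`-module `M`. -/
structure GoodFiltration (K : Type) [Field K] (n : ℕ) (M : Type)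
    [AddCommGroup M] [Module K M] [Module (Weyl K n) M]
    [IsScalarTower K (Weyl K n) M] (F : ℤ → Submodule K M) : Prop where
  mono : ∀ k, F k ≤ F (k + 1)
  exhaustive : ∀ m : M, ∃ k, m ∈ F k
  compat : ∀ j k : ℤ, ∀ w ∈ bernsteinF K n j, ∀ m ∈ F k, w • m ∈ F (j + k)
  bddBelow : ∃ k₀ : ℤ, ∀ k < k₀, F k = ⊥
  finiteDim : ∀ k, FiniteDimensional K (F k)
  good : ∃ k₁ : ℤ, ∀ k ≥ k₁, ∀ j ≥ (0 : ℤ),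
    F (j + k) ≤ Submodule.span K
      {m | ∃ w ∈ bernsteinF K n j, ∃ v ∈ F k, m = w • v}

/-- `HasMult K n M m` : the holonomic module `M` admits a good Bernstein filtration
whose Hilbert polynomial `h` satisfies `(deg h)! · (leading coeff of h) = m`; i.e.
the multiplicity of `M` is `m`. -/
def HasMult (K : Type) [Field K] (n : ℕ) (M : Type)
    [AddCommGroup M] [Module K M] [Module (Weyl K n) M]
    [IsScalarTower K (Weyl K n) M] (m : ℚ) : Prop :=
  ∃ F : ℤ → Submodule K M, GoodFiltration K n M F ∧
    ∃ h : Polynomial ℚ,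
      (∃ N : ℤ, ∀ k ≥ N, (Module.finrank K (F k) : ℚ) = h.eval (k : ℚ)) ∧
      m = (Nat.factorial h.natDegree : ℚ) * h.leadingCoeff

/-- `M` is a holonomic left `D_n`-module. -/
def IsHolonomic (K : Type) [Field K] (n : ℕ) (M : Type)
    [AddCommGroup M] [Module K M] [Module (Weyl K n) M]
    [IsScalarTower K (Weyl K n) M] : Prop :=
  Subsingleton M ∨
  ∃ F : ℤ → Submodule K M, GoodFiltration K n M F ∧
    ∃ h : Polynomial ℚ,
      (∃ N : ℤ, ∀ k ≥ N, (Module.finrank K (F k) : ℚ) = h.eval (k : ℚ)) ∧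
      h.natDegree = n

/-- The length of a module: the Krull dimension of its lattice of submodules. -/
noncomputable def mlength (A : Type) [Ring A] (M : Type) [AddCommGroup M]
    [Module A M] : WithBot ℕ∞ :=
  Order.krullDim (Submodule A M)

section LocalCoh
variable (K : Type) [Field K] (n : ℕ)

/-- The zero set in `K^n` of a polynomial. -/
def zeroSet (p : MvPolynomial (Fin n) K) : Set (Fin n → K) :=
  {x | MvPolynomial.eval x p = 0}

/-- The property that a given `D_n`-module structure on the localization
`R[f⁻¹]` is the natural one: `x_i` acts by multiplication and `∂_i` acts as the
(unique) derivation of `R[f⁻¹]` extending `∂/∂x_i` on `R`. -/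
def NatActs (f : MvPolynomial (Fin n) K)
    [Module (Weyl K n) (Localization.Away f)] : Prop :=
  (∀ (i : Fin n) (m : Localization.Away f),
      wX K n i • m =
        algebraMap (MvPolynomial (Fin n) K) (Localization.Away f)
          (MvPolynomial.X i) * m) ∧
  (∀ i : Fin n, ∃ δ : Derivation K (Localization.Away f) (Localization.Away f),
      (∀ m, wD K n i • m = δ m) ∧
      ∀ r : MvPolynomial (Fin n) K,
        δ (algebraMap (MvPolynomial (Fin n) K) (Localization.Away f) r) =
          algebraMap (MvPolynomial (Fin n) K) (Localization.Away f)
            (MvPolynomial.pderiv i r))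

/-- The first local cohomology module `H¹_{(f)}(R) = R[f⁻¹]/R` as a left
`D_n`-module. -/
noncomputable abbrev H1 (f : MvPolynomial (Fin n) K)
    [Module (Weyl K n) (Localization.Away f)] : Type :=
  (Localization.Away f) ⧸ Submodule.span (Weyl K n)
    (Set.range (algebraMap (MvPolynomial (Fin n) K) (Localization.Away f)))

end LocalCoh

section Arrangement
open scoped Classical
variable (K : Type) [Field K] (n : ℕ)

/-- The intersection poset of an arrangement `𝒜` of hyperplanes inside the
ambient affine subspace `V0`: all nonempty intersections of subfamilies
(including the ambient space `V0` itself, as the empty intersection). -/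
noncomputable def interPoset (V0 : Set (Fin n → K))
    (𝒜 : Finset (Set (Fin n → K))) : Finset (Set (Fin n → K)) :=
  (𝒜.powerset.image fun S => V0 ∩ ⋂ H ∈ S, H).filter fun X => X ≠ ∅

/-- Codimension of `X` inside the ambient affine subspace `V0`. -/
noncomputable def codim (V0 X : Set (Fin n → K)) : ℕ :=
  Module.finrank K (vectorSpan K V0) - Module.finrank K (vectorSpan K X)

/-- `μ` is the Möbius function of the intersection poset of `𝒜` (with ambient
space `V0`), for the order `X ≤ Y ↔ X ⊇ Y`. -/
def IsMobius (V0 : Set (Fin n → K)) (𝒜 : Finset (Set (Fin n → K)))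
    (μ : Set (Fin n → K) → ℤ) : Prop :=
  μ V0 = 1 ∧
  ∀ Y ∈ interPoset K n V0 𝒜, Y ≠ V0 →
    ∑ Z ∈ (interPoset K n V0 𝒜).filter fun Z => Y ⊆ Z, μ Z = 0

/-- The Poincaré polynomial `π(𝒜,t) = ∑_{X ∈ L(𝒜)} μ(X)(−t)^{codim X}`. -/
noncomputable def poin (V0 : Set (Fin n → K)) (𝒜 : Finset (Set (Fin n → K)))
    (μ : Set (Fin n → K) → ℤ) : Polynomial ℤ :=
  ∑ X ∈ interPoset K n V0 𝒜, Polynomial.C (μ X) * (- Polynomial.X) ^ codim K n V0 X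

end Arrangement


/-! ### Auxiliary lemmas for `mobius_sign` -/

set_option linter.unusedSectionVars false

section MobiusAux
open scoped Classical
variable {K : Type} [Field K] {n : ℕ} {𝒜 : Finset (Set (Fin n → K))}


lemma finsupp_deg_one {n : ℕ} (d : Fin n →₀ ℕ) (hd : (d.sum fun _ e => e) = 1) :
    ∃ i, d = Finsupp.single i 1 := by
  have hne : d ≠ 0 := by rintro rfl; simp [Finsupp.sum] at hd
  obtain ⟨i, hi⟩ := Finsupp.support_nonempty_iff.2 hne
  have hdi : 1 ≤ d i := Nat.one_le_iff_ne_zero.2 (Finsupp.mem_support_iff.1 hi)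
  refine ⟨i, Finsupp.eq_single_iff.2 ⟨?_, ?_⟩⟩
  · intro j hj
    simp only [Finset.mem_singleton]
    by_contra hji
    have hdj : 1 ≤ d j := Nat.one_le_iff_ne_zero.2 (Finsupp.mem_support_iff.1 hj)
    have h2 : d j + d i ≤ d.sum fun _ e => e :=
      Finset.add_le_sum (fun k _ => Nat.zero_le _) hj hi hji
    omega
  · have h1 : d i ≤ d.sum fun _ e => e :=
      Finset.single_le_sum (f := fun k => d k) (fun k _ => Nat.zero_le _) hi
    omega

lemma deg_le_one_eval {K : Type} [Field K] {n : ℕ} (p : MvPolynomial (Fin n) K)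
    (hp : p.totalDegree ≤ 1) (x : Fin n → K) :
    MvPolynomial.eval x p =
      MvPolynomial.coeff 0 p + ∑ i, MvPolynomial.coeff (Finsupp.single i 1) p * x i := by
  classical
  have hsupp : p.support ⊆ insert 0 (Finset.univ.image fun i => Finsupp.single i 1) := by
    intro d hd
    have hdeg : (d.sum fun _ e => e) ≤ 1 :=
      le_trans (MvPolynomial.le_totalDegree hd) hp
    rcases Nat.le_one_iff_eq_zero_or_eq_one.1 hdeg with h0 | h1
    · have : d = 0 := by
        ext j
        simp only [Finsupp.coe_zero, Pi.zero_apply]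
        by_cases hj : j ∈ d.support
        · have h2 : ∑ k ∈ d.support, d k = 0 := h0
          have h3 : d j ≤ ∑ k ∈ d.support, d k :=
            Finset.single_le_sum (f := fun k => d k) (fun k _ => Nat.zero_le _) hj
          omega
        · exact Finsupp.notMem_support_iff.1 hj
      simp [this]
    · obtain ⟨i, rfl⟩ := finsupp_deg_one d h1
      exact Finset.mem_insert_of_mem (Finset.mem_image_of_mem _ (Finset.mem_univ i))
  rw [MvPolynomial.eval_eq]
  rw [Finset.sum_subset hsupp (by
    intro d _ hd
    simp [MvPolynomial.notMem_support_iff.1 hd])]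
  rw [Finset.sum_insert (by
    simp only [Finset.mem_image]
    rintro ⟨j, -, h⟩
    exact one_ne_zero (Finsupp.single_eq_zero.1 h))]
  rw [Finset.sum_image (by
    intro a _ b _ h
    exact Finsupp.single_left_injective (by norm_num) h)]
  congr 1
  · simp
  · apply Finset.sum_congr rfl
    intro i _
    rw [Finsupp.support_single_ne_zero _ (by norm_num)]
    simp

lemma vectorSpan_sub_rep {V : Type} [AddCommGroup V] [Module K V]
    (p : V) (U : Submodule K V) :
    vectorSpan K {x | x - p ∈ U} = U := by
  have h : ({x | x - p ∈ U} : Set V) = ↑(AffineSubspace.mk' p U) := by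
    ext x
    simp only [Set.mem_setOf_eq, SetLike.mem_coe, AffineSubspace.mem_mk',
      vsub_eq_sub]
  rw [h, ← AffineSubspace.direction_eq_vectorSpan, AffineSubspace.direction_mk']

lemma dim_drop {V : Type} [AddCommGroup V] [Module K V]
    [FiniteDimensional K V] (U : Submodule K V) (f : V →ₗ[K] K)
    (h : U ⊓ LinearMap.ker f < U) :
    Module.finrank K (U ⊓ LinearMap.ker f : Submodule K V) + 1 = Module.finrank K U := by
  have hlt : Module.finrank K (U ⊓ LinearMap.ker f : Submodule K V) < Module.finrank K U :=
    Submodule.finrank_lt_finrank_of_lt h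
  have hker : (LinearMap.ker (f.domRestrict U)).map U.subtype = U ⊓ LinearMap.ker f := by
    rw [LinearMap.ker_domRestrict, Submodule.map_comap_subtype]
  have h1 : Module.finrank K (LinearMap.ker (f.domRestrict U)) =
      Module.finrank K (U ⊓ LinearMap.ker f : Submodule K V) := by
    rw [← hker, Submodule.finrank_map_subtype_eq]
  have h2 := LinearMap.finrank_range_add_finrank_ker (f.domRestrict U)
  have h3 : Module.finrank K (LinearMap.range (f.domRestrict U)) ≤ 1 := by
    have := Submodule.finrank_le (LinearMap.range (f.domRestrict U))
    simpa [Module.finrank_self] using this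
  omega

lemma hyperplane_rep {K : Type} [Field K] {n : ℕ} (p : MvPolynomial (Fin n) K)
    (hp : p.totalDegree = 1) :
    ∃ (f : ((Fin n → K) →ₗ[K] K)) (c : K), f ≠ 0 ∧ zeroSet K n p = {x | f x = c} := by
  classical
  set f : (Fin n → K) →ₗ[K] K :=
    ∑ i, MvPolynomial.coeff (Finsupp.single i 1) p • LinearMap.proj i with hf
  have hfx : ∀ x, f x = ∑ i, MvPolynomial.coeff (Finsupp.single i 1) p * x i := by
    intro x
    simp [hf, LinearMap.sum_apply, LinearMap.smul_apply, smul_eq_mul]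
  have hp0 : p ≠ 0 := by
    intro h; rw [h] at hp; simp at hp
  obtain ⟨d, hd, hdeg⟩ : ∃ d ∈ p.support, p.totalDegree = d.sum fun _ e => e := by
    obtain ⟨d, hd, h⟩ := Finset.exists_mem_eq_sup p.support
      (MvPolynomial.support_nonempty.2 hp0) fun d => d.sum fun _ e => e
    exact ⟨d, hd, h⟩
  obtain ⟨i, rfl⟩ := finsupp_deg_one d (by omega)
  have hc : MvPolynomial.coeff (Finsupp.single i 1) p ≠ 0 :=
    MvPolynomial.mem_support_iff.1 hd
  refine ⟨f, -MvPolynomial.coeff 0 p, ?_, ?_⟩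
  · intro h0
    have : f (Pi.single i 1) = MvPolynomial.coeff (Finsupp.single i 1) p := by
      rw [hfx]
      rw [Finset.sum_eq_single i]
      · simp
      · intro j _ hj
        simp [Pi.single_apply, hj]
      · simp
    rw [h0] at this
    simp at this
    exact hc this.symm
  · ext x
    simp only [zeroSet, Set.mem_setOf_eq]
    rw [deg_le_one_eval p hp.le x, ← hfx x]
    constructor <;> intro h <;> linear_combination h

lemma mem_interPoset_iff {X : Set (Fin n → K)} :
    X ∈ interPoset K n Set.univ 𝒜 ↔
      (∃ S ∈ 𝒜.powerset, Set.univ ∩ ⋂ H ∈ S, H = X) ∧ X ≠ ∅ := by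
  simp [interPoset, Finset.mem_filter, Finset.mem_image]

lemma nonempty_of_mem_interPoset {X : Set (Fin n → K)}
    (hX : X ∈ interPoset K n Set.univ 𝒜) : X.Nonempty :=
  Set.nonempty_iff_ne_empty.2 (mem_interPoset_iff.1 hX).2

lemma univ_mem_interPoset : Set.univ ∈ interPoset K n Set.univ 𝒜 := by
  rw [mem_interPoset_iff]
  refine ⟨⟨∅, by simp, by simp⟩, ?_⟩
  simp

lemma inter_mem_interPoset {Z H : Set (Fin n → K)}
    (hZ : Z ∈ interPoset K n Set.univ 𝒜) (hH : H ∈ 𝒜)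
    (hne : (Z ∩ H).Nonempty) : Z ∩ H ∈ interPoset K n Set.univ 𝒜 := by
  obtain ⟨⟨S, hS, hSZ⟩, -⟩ := mem_interPoset_iff.1 hZ
  rw [mem_interPoset_iff]
  refine ⟨⟨insert H S, ?_, ?_⟩, Set.nonempty_iff_ne_empty.1 hne⟩
  · rw [Finset.mem_powerset] at hS ⊢
    exact Finset.insert_subset hH hS
  · rw [← hSZ]
    ext x
    simp only [Set.mem_inter_iff, Set.mem_iInter, Finset.mem_insert]
    constructor
    · rintro ⟨hx, h⟩
      exact ⟨⟨hx, fun H' hH' => h H' (Or.inr hH')⟩, h H (Or.inl rfl)⟩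
    · rintro ⟨⟨hx, h⟩, hxH⟩
      refine ⟨hx, fun H' hH' => ?_⟩
      rcases hH' with rfl | hH'
      · exact hxH
      · exact h H' hH'

lemma vectorSpan_univ' : vectorSpan K (Set.univ : Set (Fin n → K)) = ⊤ := by
  have h : (Set.univ : Set (Fin n → K)) = {x | x - 0 ∈ (⊤ : Submodule K (Fin n → K))} := by
    ext x; simp
  rw [h, vectorSpan_sub_rep]

/-- Elements of the poset given by `S` are translates of submodules. -/
lemma exists_submodule_rep
    (hhyp : ∀ H ∈ 𝒜, ∃ p : MvPolynomial (Fin n) K,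
      p.totalDegree = 1 ∧ H = zeroSet K n p)
    (S : Finset (Set (Fin n → K))) (hS : S ⊆ 𝒜) (p : Fin n → K)
    (hp : p ∈ Set.univ ∩ ⋂ H ∈ S, H) :
    ∃ U : Submodule K (Fin n → K),
      (Set.univ ∩ ⋂ H ∈ S, H) = {x | x - p ∈ U} := by
  classical
  induction S using Finset.induction_on with
  | empty =>
    refine ⟨⊤, ?_⟩
    ext x; simp
  | @insert A S hA ih =>
    have hsplit : (Set.univ ∩ ⋂ H ∈ insert A S, H) =
        (Set.univ ∩ ⋂ H ∈ S, H) ∩ A := by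
      ext x
      simp only [Set.mem_inter_iff, Set.mem_iInter, Finset.mem_insert, Set.mem_univ, true_and]
      constructor
      · intro h
        exact ⟨fun H hH => h H (Or.inr hH), h A (Or.inl rfl)⟩
      · rintro ⟨h, hA'⟩ H (rfl | hH)
        · exact hA'
        · exact h H hH
    rw [hsplit] at hp ⊢
    obtain ⟨U, hU⟩ := ih (fun H hH => hS (Finset.mem_insert_of_mem hH)) hp.1
    obtain ⟨q, hq, hqz⟩ := hhyp A (hS (Finset.mem_insert_self A S))
    obtain ⟨f, c, hf0, hfc⟩ := hyperplane_rep q hq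
    have hA' : A = {x | f x = c} := by rw [hqz, hfc]
    have hpc : f p = c := by
      have := hp.2; rw [hA'] at this; exact this
    refine ⟨U ⊓ LinearMap.ker f, ?_⟩
    ext x
    simp only [Set.mem_inter_iff, Set.mem_setOf_eq, Submodule.mem_inf, LinearMap.mem_ker,
      hU, hA']
    constructor
    · rintro ⟨hx, hfx⟩
      exact ⟨hx, by rw [map_sub, hfx, hpc, sub_self]⟩
    · rintro ⟨hx, hfx⟩
      refine ⟨hx, ?_⟩
      have : f x - f p = 0 := by rw [← map_sub]; exact hfx
      rw [hpc] at this
      linear_combination this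

lemma codim_succ
    (hhyp : ∀ H ∈ 𝒜, ∃ p : MvPolynomial (Fin n) K,
      p.totalDegree = 1 ∧ H = zeroSet K n p)
    {X Z H : Set (Fin n → K)}
    (hXL : X ∈ interPoset K n Set.univ 𝒜) (hZL : Z ∈ interPoset K n Set.univ 𝒜)
    (hH : H ∈ 𝒜) (hXZH : X = Z ∩ H) (hne : X ≠ Z) :
    codim K n Set.univ X = codim K n Set.univ Z + 1 := by
  classical
  obtain ⟨p, hpX⟩ : X.Nonempty := by
    have := (mem_interPoset_iff.1 hXL).2
    exact Set.nonempty_iff_ne_empty.2 this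
  have hpZ : p ∈ Z := (hXZH ▸ hpX).1
  have hpH : p ∈ H := (hXZH ▸ hpX).2
  obtain ⟨⟨S, hS, hSZ⟩, -⟩ := mem_interPoset_iff.1 hZL
  rw [Finset.mem_powerset] at hS
  obtain ⟨U, hU⟩ := exists_submodule_rep hhyp S hS p (by rw [hSZ]; exact hpZ)
  have hZrep : Z = {x | x - p ∈ U} := by rw [← hSZ, hU]
  obtain ⟨q, hq, hqz⟩ := hhyp H hH
  obtain ⟨f, c, hf0, hfc⟩ := hyperplane_rep q hq
  have hHrep : H = {x | f x = c} := by rw [hqz, hfc]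
  have hpc : f p = c := by have := hpH; rw [hHrep] at this; exact this
  have hXrep : X = {x | x - p ∈ U ⊓ LinearMap.ker f} := by
    rw [hXZH, hZrep, hHrep]
    ext x
    simp only [Set.mem_inter_iff, Set.mem_setOf_eq, Submodule.mem_inf, LinearMap.mem_ker]
    constructor
    · rintro ⟨hx, hfx⟩
      exact ⟨hx, by rw [map_sub, hfx, hpc, sub_self]⟩
    · rintro ⟨hx, hfx⟩
      refine ⟨hx, ?_⟩
      have h2 : f x - f p = 0 := by rw [← map_sub]; exact hfx
      rw [hpc] at h2
      linear_combination h2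
  have hlt : U ⊓ LinearMap.ker f < U := by
    refine lt_of_le_of_ne inf_le_left ?_
    intro heq
    apply hne
    rw [hXrep, hZrep, heq]
  have hdrop := dim_drop U f hlt
  have hXv : vectorSpan K X = U ⊓ LinearMap.ker f := by rw [hXrep, vectorSpan_sub_rep]
  have hZv : vectorSpan K Z = U := by rw [hZrep, vectorSpan_sub_rep]
  have hUle : Module.finrank K U ≤ Module.finrank K (Fin n → K) := U.finrank_le
  have htop : Module.finrank K (vectorSpan K (Set.univ : Set (Fin n → K)))
      = Module.finrank K (Fin n → K) := by
    rw [vectorSpan_univ']; exact finrank_top K _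
  unfold codim
  rw [hXv, hZv, htop]
  omega
lemma weisner (μ : Set (Fin n → K) → ℤ) (hμ : IsMobius K n Set.univ 𝒜 μ)
    {H : Set (Fin n → K)} (hH : H ∈ 𝒜) (hHuniv : H ≠ Set.univ) :
    ∀ (m : ℕ) (W : Set (Fin n → K)), W ∈ interPoset K n Set.univ 𝒜 → W ⊆ H →
      ((interPoset K n Set.univ 𝒜).filter fun W' => W ⊆ W' ∧ W' ⊆ H).card ≤ m →
      ∑ Z ∈ (interPoset K n Set.univ 𝒜).filter fun Z => Z ∩ H = W, μ Z = 0 := by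
  classical
  set L := interPoset K n Set.univ 𝒜 with hL
  intro m
  induction m with
  | zero =>
    intro W hW hWH hcard
    exfalso
    have hWmem : W ∈ L.filter fun W' => W ⊆ W' ∧ W' ⊆ H :=
      Finset.mem_filter.2 ⟨hW, subset_rfl, hWH⟩
    have := Finset.card_pos.2 ⟨W, hWmem⟩
    omega
  | succ m ih =>
    intro W hW hWH hcard
    have hWne : W ≠ Set.univ := by
      intro h
      exact hHuniv (Set.eq_univ_of_univ_subset (h ▸ hWH))
    have hWnonempty : W.Nonempty := nonempty_of_mem_interPoset hW
    -- partition the recurrence sum by fibers of Z ↦ Z ∩ H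
    have hmaps : ∀ Z ∈ L.filter fun Z => W ⊆ Z,
        Z ∩ H ∈ L.filter fun W' => W ⊆ W' ∧ W' ⊆ H := by
      intro Z hZ
      obtain ⟨hZL, hWZ⟩ := Finset.mem_filter.1 hZ
      have hsub : W ⊆ Z ∩ H := Set.subset_inter hWZ hWH
      exact Finset.mem_filter.2
        ⟨inter_mem_interPoset hZL hH (hWnonempty.mono hsub), hsub, Set.inter_subset_right⟩
    have hfib := Finset.sum_fiberwise_of_maps_to hmaps μ
    have hrec := hμ.2 W hW hWne
    -- rewrite inner fibers
    have hinner : ∀ W' ∈ L.filter fun W'' => W ⊆ W'' ∧ W'' ⊆ H,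
        ((L.filter fun Z => W ⊆ Z).filter fun Z => Z ∩ H = W') =
          L.filter fun Z => Z ∩ H = W' := by
      intro W' hW'
      obtain ⟨hW'L, hWW', hW'H⟩ := Finset.mem_filter.1 hW'
      ext Z
      simp only [Finset.mem_filter, and_assoc]
      constructor
      · rintro ⟨hZL, -, h⟩; exact ⟨hZL, h⟩
      · rintro ⟨hZL, h⟩
        exact ⟨hZL, subset_trans hWW' (h ▸ Set.inter_subset_left), h⟩
    rw [Finset.sum_congr rfl (fun W' h => by rw [hinner W' h] :
      ∀ W' ∈ L.filter fun W'' => W ⊆ W'' ∧ W'' ⊆ H,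
        (∑ Z ∈ (L.filter fun Z => W ⊆ Z).filter fun Z => Z ∩ H = W', μ Z) =
        ∑ Z ∈ L.filter fun Z => Z ∩ H = W', μ Z)] at hfib
    rw [hrec] at hfib
    -- now ∑_{W' ∈ T W} N W' = 0
    have hWmem : W ∈ L.filter fun W' => W ⊆ W' ∧ W' ⊆ H :=
      Finset.mem_filter.2 ⟨hW, subset_rfl, hWH⟩
    rw [← Finset.add_sum_erase _ _ hWmem] at hfib
    have hzero : ∀ W' ∈ (L.filter fun W'' => W ⊆ W'' ∧ W'' ⊆ H).erase W,
        ∑ Z ∈ L.filter fun Z => Z ∩ H = W', μ Z = 0 := by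
      intro W' hW'
      obtain ⟨hne, hmem⟩ := Finset.mem_erase.1 hW'
      obtain ⟨hW'L, hWW', hW'H⟩ := Finset.mem_filter.1 hmem
      apply ih W' hW'L hW'H
      have hsub : (L.filter fun W'' => W' ⊆ W'' ∧ W'' ⊆ H) ⊆
          (L.filter fun W'' => W ⊆ W'' ∧ W'' ⊆ H).erase W := by
        intro W'' hW''
        obtain ⟨hW''L, hW'W'', hW''H⟩ := Finset.mem_filter.1 hW''
        refine Finset.mem_erase.2 ⟨?_, Finset.mem_filter.2
          ⟨hW''L, subset_trans hWW' hW'W'', hW''H⟩⟩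
        intro h
        subst h
        exact hne (subset_antisymm hW'W'' hWW')
      calc (L.filter fun W'' => W' ⊆ W'' ∧ W'' ⊆ H).card
          ≤ ((L.filter fun W'' => W ⊆ W'' ∧ W'' ⊆ H).erase W).card :=
            Finset.card_le_card hsub
        _ ≤ m := by
            rw [Finset.card_erase_of_mem hWmem]
            omega
    rw [Finset.sum_eq_zero hzero, add_zero] at hfib
    exact hfib
lemma hyperplane_ne_univ {H : Set (Fin n → K)}
    (hH : ∃ p : MvPolynomial (Fin n) K, p.totalDegree = 1 ∧ H = zeroSet K n p) :
    H ≠ Set.univ := by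
  obtain ⟨p, hp, rfl⟩ := hH
  obtain ⟨f, c, hf0, hfc⟩ := hyperplane_rep p hp
  rw [hfc]
  intro h
  obtain ⟨v, hv⟩ : ∃ v, f v ≠ 0 := by
    by_contra h'
    push_neg at h'
    exact hf0 (LinearMap.ext fun v => h' v)
  have h1 : ((c + 1) * (f v)⁻¹) • v ∈ ({x | f x = c} : Set (Fin n → K)) := by
    rw [h]; trivial
  simp only [Set.mem_setOf_eq, map_smul, smul_eq_mul] at h1
  rw [mul_assoc, inv_mul_cancel₀ hv, mul_one] at h1
  have : (1 : K) = 0 := by linear_combination h1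
  simp at this

lemma main_aux
    (hhyp : ∀ H ∈ 𝒜, ∃ p : MvPolynomial (Fin n) K,
      p.totalDegree = 1 ∧ H = zeroSet K n p)
    (μ : Set (Fin n → K) → ℤ) (hμ : IsMobius K n Set.univ 𝒜 μ) :
    ∀ (m : ℕ) (X : Set (Fin n → K)), X ∈ interPoset K n Set.univ 𝒜 →
      codim K n Set.univ X = m → 0 < (-1 : ℤ) ^ codim K n Set.univ X * μ X := by
  classical
  set L := interPoset K n Set.univ 𝒜 with hLdef
  intro m
  induction m using Nat.strong_induction_on with
  | _ m ih =>
  intro X hX hcd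
  by_cases hXuniv : X = Set.univ
  · subst hXuniv
    have h0 : codim K n Set.univ Set.univ = 0 := Nat.sub_self _
    rw [h0, pow_zero, one_mul, hμ.1]
    exact one_pos
  · -- choose a minimal S representing X
    set 𝒮 : Finset (Finset (Set (Fin n → K))) :=
      𝒜.powerset.filter fun S => Set.univ ∩ ⋂ H ∈ S, H = X with h𝒮
    have h𝒮ne : 𝒮.Nonempty := by
      obtain ⟨⟨S, hS1, hS2⟩, -⟩ := (mem_interPoset_iff (𝒜 := 𝒜)).1 hX
      exact ⟨S, Finset.mem_filter.2 ⟨hS1, hS2⟩⟩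
    obtain ⟨S, hS𝒮, hmin⟩ := Finset.exists_min_image 𝒮 Finset.card h𝒮ne
    obtain ⟨hSpow, hSX⟩ := Finset.mem_filter.1 hS𝒮
    have hS𝒜 : S ⊆ 𝒜 := Finset.mem_powerset.1 hSpow
    have hSne : S.Nonempty := by
      rcases Finset.eq_empty_or_nonempty S with rfl | h
      · exfalso; apply hXuniv; rw [← hSX]; ext x; simp
      · exact h
    obtain ⟨H, hHS⟩ := hSne
    have hH𝒜 : H ∈ 𝒜 := hS𝒜 hHS
    have hXH : X ⊆ H := by
      rw [← hSX]
      rintro x ⟨-, hx⟩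
      exact Set.mem_iInter₂.1 hx H hHS
    have hHuniv : H ≠ Set.univ := hyperplane_ne_univ (hhyp H hH𝒜)
    have hXne : X.Nonempty := nonempty_of_mem_interPoset hX
    -- the witness Z₀
    set Z₀ : Set (Fin n → K) := Set.univ ∩ ⋂ H' ∈ S.erase H, H' with hZ₀def
    have hXZ₀ : X ⊆ Z₀ := by
      rw [← hSX]
      rintro x ⟨hx1, hx2⟩
      exact ⟨hx1, Set.mem_iInter₂.2 fun H' hH' =>
        Set.mem_iInter₂.1 hx2 H' (Finset.mem_of_mem_erase hH')⟩
    have hZ₀L : Z₀ ∈ L := by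
      refine mem_interPoset_iff.2 ⟨⟨S.erase H, ?_, rfl⟩, ?_⟩
      · exact Finset.mem_powerset.2 (subset_trans (Finset.erase_subset H S) hS𝒜)
      · exact Set.nonempty_iff_ne_empty.1 (hXne.mono hXZ₀)
    have hZ₀H : Z₀ ∩ H = X := by
      rw [← hSX, hZ₀def]
      ext x
      simp only [Set.mem_inter_iff, Set.mem_univ, true_and, Set.mem_iInter]
      constructor
      · rintro ⟨hx, hxH⟩ H' hH'
        by_cases h : H' = H
        · exact h ▸ hxH
        · exact hx H' (Finset.mem_erase.2 ⟨h, hH'⟩)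
      · intro hx
        exact ⟨fun H' hH' => hx H' (Finset.mem_of_mem_erase hH'), hx H hHS⟩
    have hZ₀X : Z₀ ≠ X := by
      intro h
      have hmem : S.erase H ∈ 𝒮 := by
        refine Finset.mem_filter.2 ⟨Finset.mem_powerset.2
          (subset_trans (Finset.erase_subset H S) hS𝒜), ?_⟩
        rw [← hZ₀def, h]
      have := hmin _ hmem
      rw [Finset.card_erase_of_mem hHS] at this
      have hpos := Finset.card_pos.2 ⟨H, hHS⟩
      omega
    -- Weisner at X
    have hwei := weisner μ hμ hH𝒜 hHuniv
      ((L.filter fun W' => X ⊆ W' ∧ W' ⊆ H).card) X hX hXH le_rfl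
    set fib : Finset (Set (Fin n → K)) := L.filter fun Z => Z ∩ H = X with hfibdef
    have hXfib : X ∈ fib :=
      Finset.mem_filter.2 ⟨hX, Set.inter_eq_left.2 hXH⟩
    have hadd : μ X + ∑ Z ∈ fib.erase X, μ Z = 0 := by
      rw [Finset.add_sum_erase fib μ hXfib]
      exact hwei
    -- facts about the terms
    have hterm : ∀ Z ∈ fib.erase X,
        codim K n Set.univ X = codim K n Set.univ Z + 1 := by
      intro Z hZ
      obtain ⟨hZX, hZfib⟩ := Finset.mem_erase.1 hZ
      obtain ⟨hZL, hZH⟩ := Finset.mem_filter.1 hZfib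
      exact codim_succ hhyp hX hZL hH𝒜 hZH.symm (fun h => hZX h.symm)
    have key : (-1 : ℤ) ^ codim K n Set.univ X * μ X =
        ∑ Z ∈ fib.erase X, (-1) ^ codim K n Set.univ Z * μ Z := by
      have h2 : ∀ Z ∈ fib.erase X, ((-1 : ℤ)) ^ codim K n Set.univ Z * μ Z =
          -((-1) ^ codim K n Set.univ X * μ Z) := by
        intro Z hZ
        rw [hterm Z hZ, pow_succ]
        ring
      rw [Finset.sum_congr rfl h2, Finset.sum_neg_distrib, ← Finset.mul_sum]
      have hE : ∑ Z ∈ fib.erase X, μ Z = -μ X := by linarith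
      rw [hE]
      ring
    rw [key]
    apply Finset.sum_pos
    · intro Z hZ
      obtain ⟨hZX, hZfib⟩ := Finset.mem_erase.1 hZ
      obtain ⟨hZL, hZH⟩ := Finset.mem_filter.1 hZfib
      have hc := hterm Z hZ
      exact ih (codim K n Set.univ Z) (by omega) Z hZL rfl
    · refine ⟨Z₀, Finset.mem_erase.2 ⟨hZ₀X, Finset.mem_filter.2 ⟨hZ₀L, hZ₀H⟩⟩⟩

end MobiusAux

/-- For any element `X` of the intersection poset of a
hyperplane arrangement `𝒜`, one has `(−1)^{codim X} μ(X) > 0`. -/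
theorem mobius_sign
    (K : Type) [Field K] (n : ℕ)
    (𝒜 : Finset (Set (Fin n → K)))
    (hhyp : ∀ H ∈ 𝒜, ∃ p : MvPolynomial (Fin n) K,
      p.totalDegree = 1 ∧ H = zeroSet K n p)
    (μ : Set (Fin n → K) → ℤ) (hμ : IsMobius K n Set.univ 𝒜 μ)
    (X : Set (Fin n → K)) (hX : X ∈ interPoset K n Set.univ 𝒜) :
    0 < (-1 : ℤ) ^ codim K n Set.univ X * μ X :=
  main_aux hhyp μ hμ (codim K n Set.univ X) X hX rfl
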